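/- Let x ∈ Ω, τ > 0, and let A be the forward finite-difference Jacobian approximation of F at x with stepsize τ. Given r, ε > 0, if ψ_{p,r}(x) > ε and τ ≤ max{2η_{p,r}(x;A), ε} / (L_{h,p} L_J c_{p,2}(m) c_{2,p}(n) √n), then η_{p,r}(x;A) > ε/2. -/

import Mathlib

/-!
ψ and η differ only in the model matrix, and `h` is Lipschitz, so replacing `J_F(x)` by the
finite-difference matrix `A` moves each model value by at most `L_h c_{p,2} ‖(J_F(x) - A) s‖₂`.
The `j`-th column of `J_F(x) - A` is a first-order Taylor remainder of `F` along `τ e_j`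
divided by `τ`, hence has Euclidean norm at most `L_J τ / 2`; summing over columns gives
`‖(J_F(x) - A) s‖₂ ≤ (L_J τ / 2) √n ‖s‖₂`. With `‖s‖₂ ≤ c_{2,p} r` on the trust region this yields
`ψ ≤ η + K τ / 2`, `K = L_h L_J c_{p,2} c_{2,p} √n`. If `η ≤ ε / 2`, the step-size condition reads
`K τ ≤ ε`, so `ψ ≤ ε`.
-/

open scoped ENNReal

noncomputable section

/-- The `p`-norm on `ℝ^n`, for `p ∈ [1,∞]`. -/
def pNorm (p : ℝ≥0∞) {n : ℕ} (x : Fin n → ℝ) : ℝ :=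
  if p = ∞ then ⨆ i, |x i| else (∑ i, |x i| ^ p.toReal) ^ (1 / p.toReal)

/-- The Euclidean norm on `ℝ^n`. -/
def eucNorm {n : ℕ} (x : Fin n → ℝ) : ℝ := Real.sqrt (∑ i, x i ^ 2)

/-- The operator norm of a matrix, induced by Euclidean norms. -/
def opNorm2 {m n : ℕ} (A : Matrix (Fin m) (Fin n) ℝ) : ℝ :=
  sSup ((fun v => eucNorm (A.mulVec v)) '' {v | eucNorm v ≤ 1})

/-- Forward finite-difference approximation of the Jacobian of `F` at `x` with stepsize `τ`:
the `j`-th column is `(F (x + τ e_j) - F x) / τ`. -/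
def fdMatrix {n m : ℕ} (F : (Fin n → ℝ) → (Fin m → ℝ)) (x : Fin n → ℝ) (τ : ℝ) :
    Matrix (Fin m) (Fin n) ℝ :=
  Matrix.of fun i j => (F (x + Pi.single j τ) i - F x i) / τ

/-- Stationarity measure `ψ_{p,r}(x)`. -/
def psi {n m : ℕ} (Ω : Set (Fin n → ℝ)) (F : (Fin n → ℝ) → (Fin m → ℝ))
    (h : (Fin m → ℝ) → ℝ) (J : (Fin n → ℝ) → Matrix (Fin m) (Fin n) ℝ)
    (p : ℝ≥0∞) (r : ℝ) (x : Fin n → ℝ) : ℝ :=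
  r⁻¹ * (h (F x) -
    sInf ((fun s => h (F x + (J x).mulVec s)) '' {s | x + s ∈ Ω ∧ pNorm p s ≤ r}))

/-- Approximate stationarity measure `η_{p,r}(x; A)`. -/
def eta {n m : ℕ} (Ω : Set (Fin n → ℝ)) (F : (Fin n → ℝ) → (Fin m → ℝ))
    (h : (Fin m → ℝ) → ℝ) (p : ℝ≥0∞) (r : ℝ) (x : Fin n → ℝ)
    (A : Matrix (Fin m) (Fin n) ℝ) : ℝ :=
  r⁻¹ * (h (F x) -
    sInf ((fun s => h (F x + A.mulVec s)) '' {s | x + s ∈ Ω ∧ pNorm p s ≤ r}))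

open Matrix

section EuclideanNorm

variable {k : ℕ}

lemma eucNorm_eq_norm_toLp (v : Fin k → ℝ) :
    eucNorm v = ‖(WithLp.toLp 2 v : EuclideanSpace ℝ (Fin k))‖ := by
  simp [EuclideanSpace.norm_eq, eucNorm]

lemma eucNorm_nonneg (v : Fin k → ℝ) : 0 ≤ eucNorm v := Real.sqrt_nonneg _

lemma eucNorm_smul (c : ℝ) (v : Fin k → ℝ) : eucNorm (c • v) = |c| * eucNorm v := by
  rw [eucNorm_eq_norm_toLp, eucNorm_eq_norm_toLp, WithLp.toLp_smul, norm_smul, Real.norm_eq_abs]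

lemma eucNorm_eq_zero {v : Fin k → ℝ} : eucNorm v = 0 ↔ v = 0 := by
  rw [eucNorm_eq_norm_toLp, norm_eq_zero, ← WithLp.toLp_zero 2, (WithLp.toLp_injective 2).eq_iff]

lemma eucNorm_single (j : Fin k) (c : ℝ) : eucNorm (Pi.single j c) = |c| := by
  simp [eucNorm, Pi.single_apply, sq, Real.sqrt_mul_self_eq_abs]

lemma sum_abs_le_sqrt_mul_eucNorm (v : Fin k → ℝ) : ∑ j, |v j| ≤ √k * eucNorm v := by
  have hsq : (∑ j, |v j|) ^ 2 ≤ k * ∑ j, v j ^ 2 := by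
    simpa using sq_sum_le_card_mul_sum_sq (s := Finset.univ) (f := fun j => |v j|)
  rw [eucNorm, ← Real.sqrt_mul (Nat.cast_nonneg k)]
  exact Real.le_sqrt_of_sq_le hsq

end EuclideanNorm

lemma pNorm_zero {k : ℕ} {p : ℝ≥0∞} (hp : p ≠ 0) : pNorm p (0 : Fin k → ℝ) = 0 := by
  rcases eq_or_ne p ∞ with rfl | hpi
  · simp [pNorm]
  · have hpt : 0 < p.toReal := ENNReal.toReal_pos hp hpi
    simp [pNorm, hpi, Real.zero_rpow hpt.ne', Real.zero_rpow (inv_ne_zero hpt.ne')]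

section MatrixBounds

variable {k l : ℕ}

lemma eucNorm_mulVec_le_sum (M : Matrix (Fin l) (Fin k) ℝ) (s : Fin k → ℝ) :
    eucNorm (M *ᵥ s) ≤ ∑ j, |s j| * eucNorm (M.col j) := by
  have hcols : M *ᵥ s = ∑ j, s j • M.col j := by
    funext i
    simp [Matrix.mulVec, dotProduct, Finset.sum_apply, mul_comm]
  simp only [hcols, eucNorm_eq_norm_toLp, WithLp.toLp_sum, WithLp.toLp_smul, ← Real.norm_eq_abs,
    ← norm_smul]
  exact norm_sum_le _ _

lemma eucNorm_mulVec_le_of_col_le {M : Matrix (Fin l) (Fin k) ℝ} {c : ℝ} (hc : 0 ≤ c)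
    (hM : ∀ j, eucNorm (M.col j) ≤ c) (s : Fin k → ℝ) :
    eucNorm (M *ᵥ s) ≤ c * √k * eucNorm s :=
  calc eucNorm (M *ᵥ s) ≤ ∑ j, |s j| * eucNorm (M.col j) := eucNorm_mulVec_le_sum M s
    _ ≤ ∑ j, |s j| * c := by gcongr with j; exact hM j
    _ = c * ∑ j, |s j| := by rw [← Finset.sum_mul, mul_comm]
    _ ≤ c * (√k * eucNorm s) := by gcongr; exact sum_abs_le_sqrt_mul_eucNorm s
    _ = c * √k * eucNorm s := by ring

lemma exists_eucNorm_mulVec_le (M : Matrix (Fin l) (Fin k) ℝ) :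
    ∃ C, 0 ≤ C ∧ ∀ s, eucNorm (M *ᵥ s) ≤ C * eucNorm s := by
  have hC : 0 ≤ ∑ j, eucNorm (M.col j) := Finset.sum_nonneg fun j _ => eucNorm_nonneg _
  refine ⟨(∑ j, eucNorm (M.col j)) * √k, by positivity, eucNorm_mulVec_le_of_col_le hC fun j => ?_⟩
  exact Finset.single_le_sum (fun j _ => eucNorm_nonneg (M.col j)) (Finset.mem_univ j)

lemma eucNorm_mulVec_le_opNorm2 (M : Matrix (Fin l) (Fin k) ℝ) (v : Fin k → ℝ) :
    eucNorm (M *ᵥ v) ≤ opNorm2 M * eucNorm v := by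
  rcases eq_or_ne (eucNorm v) 0 with hv | hv
  · obtain rfl := eucNorm_eq_zero.mp hv
    rw [hv, mulVec_zero, mul_zero]
    exact (eucNorm_eq_zero.mpr rfl).le
  have hvpos : 0 < eucNorm v := (eucNorm_nonneg v).lt_of_ne' hv
  have hbdd : BddAbove ((fun v => eucNorm (M *ᵥ v)) '' {v | eucNorm v ≤ 1}) := by
    obtain ⟨C, hC, hMC⟩ := exists_eucNorm_mulVec_le M
    refine ⟨C, ?_⟩
    rintro _ ⟨w, hw, rfl⟩
    exact (hMC w).trans (mul_le_of_le_one_right hC hw)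
  have hunit : eucNorm (M *ᵥ ((eucNorm v)⁻¹ • v)) ≤ opNorm2 M := by
    refine le_csSup hbdd ⟨_, ?_, rfl⟩
    simp [eucNorm_smul, abs_of_pos hvpos, hv]
  rw [mulVec_smul, eucNorm_smul, abs_of_pos (inv_pos.mpr hvpos)] at hunit
  rwa [inv_mul_le_iff₀ hvpos, mul_comm] at hunit

end MatrixBounds

section Taylor

variable {n m : ℕ} {F : (Fin n → ℝ) → (Fin m → ℝ)} {J : (Fin n → ℝ) → Matrix (Fin m) (Fin n) ℝ}
  {LJ : ℝ}

lemma hasDerivAt_firstOrderRemainder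
    (hJ : ∀ y, HasFDerivAt F (LinearMap.toContinuousLinearMap (Matrix.mulVecLin (J y))) y)
    (x d : Fin n → ℝ) (t : ℝ) :
    HasDerivAt (fun t : ℝ => (WithLp.toLp 2 (F (x + t • d) - F x - t • (J x *ᵥ d)) :
        EuclideanSpace ℝ (Fin m)))
      (WithLp.toLp 2 ((J (x + t • d) - J x) *ᵥ d)) t := by
  let e : (Fin m → ℝ) ≃L[ℝ] EuclideanSpace ℝ (Fin m) := (EuclideanSpace.equiv (Fin m) ℝ).symm
  have hpath : HasDerivAt (fun t : ℝ => x + t • d) d t := by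
    simpa using ((hasDerivAt_id t).smul_const d).const_add x
  have hF : HasDerivAt (fun t : ℝ => F (x + t • d)) (J (x + t • d) *ᵥ d) t := by
    exact (hJ (x + t • d)).comp_hasDerivAt t hpath
  have hlin : HasDerivAt (fun t : ℝ => t • (J x *ᵥ d)) (J x *ᵥ d) t := by
    simpa using (hasDerivAt_id t).smul_const (J x *ᵥ d)
  rw [sub_mulVec]
  exact e.hasFDerivAt.comp_hasDerivAt t ((hF.sub_const (F x)).sub hlin)

lemma eucNorm_sub_sub_mulVec_le
    (hJ : ∀ y, HasFDerivAt F (LinearMap.toContinuousLinearMap (Matrix.mulVecLin (J y))) y)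
    (hJLip : ∀ y z, opNorm2 (J y - J z) ≤ LJ * eucNorm (y - z)) (x y : Fin n → ℝ) :
    eucNorm (F y - F x - J x *ᵥ (y - x)) ≤ LJ / 2 * eucNorm (y - x) ^ 2 := by
  set d := y - x
  have hderiv := hasDerivAt_firstOrderRemainder hJ x d
  have hbound : ∀ t ∈ Set.Ico (0 : ℝ) 1,
      ‖(WithLp.toLp 2 ((J (x + t • d) - J x) *ᵥ d) : EuclideanSpace ℝ (Fin m))‖
        ≤ LJ * eucNorm d ^ 2 * t := by
    intro t ht
    rw [← eucNorm_eq_norm_toLp]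
    calc eucNorm ((J (x + t • d) - J x) *ᵥ d) ≤ opNorm2 (J (x + t • d) - J x) * eucNorm d :=
          eucNorm_mulVec_le_opNorm2 _ _
      _ ≤ LJ * eucNorm (x + t • d - x) * eucNorm d := by
          gcongr
          · exact eucNorm_nonneg d
          · exact hJLip _ _
      _ = LJ * eucNorm d ^ 2 * t := by
          rw [add_sub_cancel_left, eucNorm_smul, abs_of_nonneg ht.1]
          ring
  have hremainder := image_norm_le_of_norm_deriv_right_le_deriv_boundary (a := 0) (b := 1)
    (fun t _ => (hderiv t).continuousAt.continuousWithinAt)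
    (fun t _ => (hderiv t).hasDerivWithinAt)
    (B := fun t => LJ * eucNorm d ^ 2 * t ^ 2 / 2) (B' := fun t => LJ * eucNorm d ^ 2 * t)
    (by simp)
    (fun t => by
      refine (((hasDerivAt_pow 2 t).const_mul (LJ * eucNorm d ^ 2)).div_const 2).congr_deriv ?_
      ring)
    hbound (Set.right_mem_Icc.mpr zero_le_one)
  rw [← eucNorm_eq_norm_toLp] at hremainder
  simp only [one_smul, one_pow, mul_one, d, add_sub_cancel] at hremainder
  linarith

end Taylor

section FiniteDifference

variable {n m : ℕ} {F : (Fin n → ℝ) → (Fin m → ℝ)} {J : (Fin n → ℝ) → Matrix (Fin m) (Fin n) ℝ}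
  {LJ : ℝ}

lemma col_sub_fdMatrix (x : Fin n → ℝ) {τ : ℝ} (hτ : τ ≠ 0) (j : Fin n) :
    (J x - fdMatrix F x τ).col j
      = -τ⁻¹ • (F (x + Pi.single j τ) - F x - J x *ᵥ (x + Pi.single j τ - x)) := by
  funext i
  simp only [add_sub_cancel_left, mulVec_single, col_apply, Matrix.sub_apply, fdMatrix, of_apply,
    Pi.smul_apply, Pi.sub_apply, MulOpposite.smul_eq_mul_unop, MulOpposite.unop_op, smul_eq_mul]
  field_simp
  ring

lemma eucNorm_col_sub_fdMatrix_le
    (hJ : ∀ y, HasFDerivAt F (LinearMap.toContinuousLinearMap (Matrix.mulVecLin (J y))) y)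
    (hJLip : ∀ y z, opNorm2 (J y - J z) ≤ LJ * eucNorm (y - z))
    (x : Fin n → ℝ) {τ : ℝ} (hτ : 0 < τ) (j : Fin n) :
    eucNorm ((J x - fdMatrix F x τ).col j) ≤ LJ * τ / 2 := by
  have htaylor := eucNorm_sub_sub_mulVec_le hJ hJLip x (x + Pi.single j τ)
  rw [add_sub_cancel_left, eucNorm_single, abs_of_pos hτ] at htaylor
  rw [col_sub_fdMatrix x hτ.ne', eucNorm_smul, abs_neg, abs_inv, abs_of_pos hτ,
    add_sub_cancel_left, inv_mul_le_iff₀ hτ]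
  linarith

lemma eucNorm_sub_fdMatrix_mulVec_le
    (hJ : ∀ y, HasFDerivAt F (LinearMap.toContinuousLinearMap (Matrix.mulVecLin (J y))) y)
    (hLJ : 0 ≤ LJ) (hJLip : ∀ y z, opNorm2 (J y - J z) ≤ LJ * eucNorm (y - z))
    (x : Fin n → ℝ) {τ : ℝ} (hτ : 0 < τ) (s : Fin n → ℝ) :
    eucNorm ((J x - fdMatrix F x τ) *ᵥ s) ≤ LJ * τ / 2 * √n * eucNorm s :=
  eucNorm_mulVec_le_of_col_le (by positivity) (eucNorm_col_sub_fdMatrix_le hJ hJLip x hτ) s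

end FiniteDifference

lemma sInf_image_le_sInf_image_add {α : Type*} {S : Set α} (hS : S.Nonempty) {f g : α → ℝ}
    (hf : BddBelow (f '' S)) {D : ℝ} (hfg : ∀ s ∈ S, f s ≤ g s + D) :
    sInf (f '' S) ≤ sInf (g '' S) + D := by
  rw [← sub_le_iff_le_add]
  refine le_csInf (hS.image g) ?_
  rintro _ ⟨s, hs, rfl⟩
  linarith [csInf_le hf (Set.mem_image_of_mem f hs), hfg s hs]

lemma bddBelow_image_comp_add_mulVec {n m : ℕ} {h : (Fin m → ℝ) → ℝ} {L R : ℝ} (hL : 0 ≤ L)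
    (hh : ∀ z w, |h z - h w| ≤ L * eucNorm (z - w)) {S : Set (Fin n → ℝ)}
    (hS : ∀ s ∈ S, eucNorm s ≤ R) (z : Fin m → ℝ) (A : Matrix (Fin m) (Fin n) ℝ) :
    BddBelow ((fun s => h (z + A *ᵥ s)) '' S) := by
  obtain ⟨C, hC, hAC⟩ := exists_eucNorm_mulVec_le A
  refine ⟨h z - L * (C * R), ?_⟩
  rintro _ ⟨s, hs, rfl⟩
  have hdiff := (abs_le.mp (hh (z + A *ᵥ s) z)).1
  rw [add_sub_cancel_left] at hdiff
  have hAs : L * eucNorm (A *ᵥ s) ≤ L * (C * R) := by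
    gcongr
    exact (hAC s).trans (by gcongr; exact hS s hs)
  show h z - L * (C * R) ≤ h (z + A *ᵥ s)
  linarith

section TrustRegion

variable {n m : ℕ} (Ω : Set (Fin n → ℝ)) (F : (Fin n → ℝ) → (Fin m → ℝ))
  (h : (Fin m → ℝ) → ℝ) (p : ℝ≥0∞) (r : ℝ) (x : Fin n → ℝ)

def trustRegion : Set (Fin n → ℝ) := {s | x + s ∈ Ω ∧ pNorm p s ≤ r}

lemma eta_eq (A : Matrix (Fin m) (Fin n) ℝ) :
    eta Ω F h p r x A
      = r⁻¹ * (h (F x) - sInf ((fun s => h (F x + A *ᵥ s)) '' trustRegion Ω p r x)) := rfl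

variable {Ω p r x}

lemma zero_mem_trustRegion (hx : x ∈ Ω) (hp : p ≠ 0) (hr : 0 ≤ r) :
    (0 : Fin n → ℝ) ∈ trustRegion Ω p r x :=
  ⟨by simpa using hx, by rw [pNorm_zero hp]; exact hr⟩

variable {F h}

lemma eta_le_eta_add {A B : Matrix (Fin m) (Fin n) ℝ} {D : ℝ} (hr : 0 < r)
    (hne : (trustRegion Ω p r x).Nonempty)
    (hbdd : BddBelow ((fun s => h (F x + A *ᵥ s)) '' trustRegion Ω p r x))
    (hAB : ∀ s ∈ trustRegion Ω p r x, h (F x + A *ᵥ s) ≤ h (F x + B *ᵥ s) + D) :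
    eta Ω F h p r x B ≤ eta Ω F h p r x A + D / r := by
  have hinf := sInf_image_le_sInf_image_add hne hbdd hAB
  rw [eta_eq, eta_eq, div_eq_inv_mul, ← mul_add]
  gcongr
  linarith

end TrustRegion

lemma psi_le_eta_fdMatrix_add {n m : ℕ} {p : ℝ≥0∞} {Ω : Set (Fin n → ℝ)}
    {F : (Fin n → ℝ) → (Fin m → ℝ)} {J : (Fin n → ℝ) → Matrix (Fin m) (Fin n) ℝ}
    (hJ : ∀ y, HasFDerivAt F (LinearMap.toContinuousLinearMap (Matrix.mulVecLin (J y))) y)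
    {LJ : ℝ} (hLJ : 0 ≤ LJ) (hJLip : ∀ y z, opNorm2 (J y - J z) ≤ LJ * eucNorm (y - z))
    {h : (Fin m → ℝ) → ℝ} {Lh : ℝ} (hLh : 0 ≤ Lh)
    (hhLip : ∀ z w, |h z - h w| ≤ Lh * pNorm p (z - w))
    {cnp cpm : ℝ} (hcnp0 : 0 ≤ cnp) (hcpm0 : 0 ≤ cpm)
    (hcnp : ∀ v : Fin n → ℝ, eucNorm v ≤ cnp * pNorm p v)
    (hcpm : ∀ z : Fin m → ℝ, pNorm p z ≤ cpm * eucNorm z)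
    {x : Fin n → ℝ} (hx : x ∈ Ω) (hp : p ≠ 0) {τ r : ℝ} (hτ : 0 < τ) (hr : 0 < r) :
    psi Ω F h J p r x ≤ eta Ω F h p r x (fdMatrix F x τ) + Lh * LJ * cpm * cnp * √n * τ / 2 := by
  set A := fdMatrix F x τ
  have hhEuc : ∀ z w, |h z - h w| ≤ Lh * cpm * eucNorm (z - w) := fun z w =>
    (hhLip z w).trans (by rw [mul_assoc]; gcongr; exact hcpm _)
  have hR : ∀ s ∈ trustRegion Ω p r x, eucNorm s ≤ cnp * r := fun s hs =>
    (hcnp s).trans (by gcongr; exact hs.2)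
  have hmodel : ∀ s ∈ trustRegion Ω p r x,
      h (F x + A *ᵥ s) ≤ h (F x + J x *ᵥ s) + Lh * cpm * (LJ * τ / 2 * √n * (cnp * r)) := by
    intro s hs
    have hdiff := (abs_le.mp (hhEuc (F x + J x *ᵥ s) (F x + A *ᵥ s))).1
    rw [add_sub_add_left_eq_sub, ← sub_mulVec] at hdiff
    have hbound : Lh * cpm * eucNorm ((J x - A) *ᵥ s)
        ≤ Lh * cpm * (LJ * τ / 2 * √n * (cnp * r)) := by
      gcongr
      exact (eucNorm_sub_fdMatrix_mulVec_le hJ hLJ hJLip x hτ s).trans (by gcongr; exact hR s hs)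
    linarith
  calc psi Ω F h J p r x = eta Ω F h p r x (J x) := rfl
    _ ≤ eta Ω F h p r x A + Lh * cpm * (LJ * τ / 2 * √n * (cnp * r)) / r :=
        eta_le_eta_add hr ⟨0, zero_mem_trustRegion hx hp hr.le⟩
          (bddBelow_image_comp_add_mulVec (by positivity) hhEuc hR (F x) A) hmodel
    _ = eta Ω F h p r x A + Lh * LJ * cpm * cnp * √n * τ / 2 := by
        field_simp

theorem stmt4_general
    {n m : ℕ} (p : ℝ≥0∞) (hp : 1 ≤ p)
    (Ω : Set (Fin n → ℝ))
    (F : (Fin n → ℝ) → (Fin m → ℝ)) (J : (Fin n → ℝ) → Matrix (Fin m) (Fin n) ℝ)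
    (hJ : ∀ y, HasFDerivAt F (LinearMap.toContinuousLinearMap (Matrix.mulVecLin (J y))) y)
    (LJ : ℝ) (hLJ : 0 < LJ)
    (hJLip : ∀ y z, opNorm2 (J y - J z) ≤ LJ * eucNorm (y - z))
    (h : (Fin m → ℝ) → ℝ)
    (Lh : ℝ) (hLh : 0 < Lh)
    (hhLip : ∀ z w, |h z - h w| ≤ Lh * pNorm p (z - w))
    (cnp cpm : ℝ) (hcnp1 : 1 ≤ cnp) (hcpm1 : 1 ≤ cpm)
    (hcnp : ∀ v : Fin n → ℝ, eucNorm v ≤ cnp * pNorm p v)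
    (hcpm : ∀ z : Fin m → ℝ, pNorm p z ≤ cpm * eucNorm z)
    (x : Fin n → ℝ) (hx : x ∈ Ω) (τ : ℝ) (hτ : 0 < τ) (r ε : ℝ) (hr : 0 < r) (hε : 0 < ε)
    (hψ : ε < psi Ω F h J p r x)
    (hτle : τ ≤ max (2 * eta Ω F h p r x (fdMatrix F x τ)) ε /
      (Lh * LJ * cpm * cnp * Real.sqrt n)) :
    ε / 2 < eta Ω F h p r x (fdMatrix F x τ) := by
  have hcnp0 : 0 ≤ cnp := zero_le_one.trans hcnp1
  have hcpm0 : 0 ≤ cpm := zero_le_one.trans hcpm1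
  have hψη := psi_le_eta_fdMatrix_add hJ hLJ.le hJLip hLh.le hhLip hcnp0 hcpm0 hcnp hcpm hx
    (zero_lt_one.trans_le hp).ne' hτ hr
  by_contra! hη
  have hK : 0 ≤ Lh * LJ * cpm * cnp * √n :=
    mul_nonneg (mul_nonneg (mul_nonneg (mul_nonneg hLh.le hLJ.le) hcpm0) hcnp0) (Real.sqrt_nonneg _)
  rw [max_eq_right (by linarith)] at hτle
  have hτε : τ * (Lh * LJ * cpm * cnp * √n) ≤ ε := mul_le_of_le_div₀ hε.le hK hτle
  linarith

/-- Lemma 2.6: if ψ > ε and τ is small enough then η > ε/2. -/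
theorem stmt4
    {n m : ℕ} (hn : 1 ≤ n) (hm : 1 ≤ m) (p : ℝ≥0∞) (hp : 1 ≤ p)
    (Ω : Set (Fin n → ℝ)) (hΩne : Ω.Nonempty) (hΩcl : IsClosed Ω) (hΩcv : Convex ℝ Ω)
    (F : (Fin n → ℝ) → (Fin m → ℝ)) (J : (Fin n → ℝ) → Matrix (Fin m) (Fin n) ℝ)
    (hJ : ∀ y, HasFDerivAt F (LinearMap.toContinuousLinearMap (Matrix.mulVecLin (J y))) y)
    (LJ : ℝ) (hLJ : 0 < LJ)
    (hJLip : ∀ y z, opNorm2 (J y - J z) ≤ LJ * eucNorm (y - z))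
    (h : (Fin m → ℝ) → ℝ) (hconv : ConvexOn ℝ Set.univ h)
    (Lh : ℝ) (hLh : 0 < Lh)
    (hhLip : ∀ z w, |h z - h w| ≤ Lh * pNorm p (z - w))
    (cnp cpm : ℝ) (hcnp1 : 1 ≤ cnp) (hcpm1 : 1 ≤ cpm)
    (hcnp : ∀ v : Fin n → ℝ, eucNorm v ≤ cnp * pNorm p v)
    (hcpm : ∀ z : Fin m → ℝ, pNorm p z ≤ cpm * eucNorm z)
    (x : Fin n → ℝ) (hx : x ∈ Ω) (τ : ℝ) (hτ : 0 < τ) (r ε : ℝ) (hr : 0 < r) (hε : 0 < ε)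
    (hψ : ε < psi Ω F h J p r x)
    (hτle : τ ≤ max (2 * eta Ω F h p r x (fdMatrix F x τ)) ε /
      (Lh * LJ * cpm * cnp * Real.sqrt n)) :
    ε / 2 < eta Ω F h p r x (fdMatrix F x τ) :=
  stmt4_general p hp Ω F J hJ LJ hLJ hJLip h Lh hLh hhLip cnp cpm hcnp1 hcpm1 hcnp hcpm x hx τ hτ r
    ε hr hε hψ hτle
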